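/- With τ² = 1, for every nonempty u ⊆ [r] the gain ratio satisfies 2^{|u|} − 1 − (2^{r+1}−2)ε < γ_u/ν_u ≤ 2^{|u|}(1+2η)^{r−|u|} − 1 + (2^{r+1}−2)ε, where η = max_{∅⊊u⊊v} ν_v/ν_u. -/

import Mathlib

/-!
Writing `A(i, i')` for the set of coordinates on which the units `i, i'` agree, the weight
`2 ^ #A` counts the subsets `w ⊆ A`. Exchanging the order of summation turns the gain into
`γ_u = ∑_w (ν_{u ∪ w} + c_w)` with `c_w = ν_w ν_u / N - 2 / N² ∑_i N_{i,u} N_{i,w}`.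
For `w = ∅` the correction is `-ν_u`. For each of the `2 ^ r - 1` nonempty `w` the first term
lies in `[ν_u / N, ε ν_u]` and the second in `[0, 2 ε ν_u]`, because `1 ≤ ν_w` and
`N_{i,w} ≤ N_{i,{j}} ≤ N ε` for `j ∈ w`; the positive `ν_u / N` makes the lower bound strict.
The main sum lies between its `w ⊆ u` part `2 ^ #u ν_u` and
`∑_w η ^ #(w \ u) ν_u = 2 ^ #u (1 + η) ^ (r - #u) ν_u`, obtained by adding the coordinates of
`w \ u` to `u` one at a time.
-/

open Finset

theorem apply_union_le_pow_card_sdiff_mul {ι : Type*} [DecidableEq ι] {f : Finset ι → ℝ} {η : ℝ}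
    {u : Finset ι} (hη : 0 ≤ η) (hf : ∀ v a, u ⊆ v → a ∉ v → f (insert a v) ≤ η * f v)
    (s : Finset ι) : f (u ∪ s) ≤ η ^ #(s \ u) * f u := by
  induction s using Finset.induction_on with
  | empty => simp
  | insert a s ha ih =>
    by_cases hau : a ∈ u
    · rwa [union_insert, insert_eq_of_mem (mem_union_left s hau), insert_sdiff_of_mem s hau]
    · rw [union_insert, insert_sdiff_of_notMem s hau,
        card_insert_of_notMem fun h => ha (mem_sdiff.1 h).1, pow_succ', mul_assoc]
      calc f (insert a (u ∪ s)) ≤ η * f (u ∪ s) :=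
            hf _ a subset_union_left (by simp [hau, ha])
        _ ≤ η * (η ^ #(s \ u) * f u) := mul_le_mul_of_nonneg_left ih hη

theorem finsum_mul_eq_sum_toFinset {α : Type*} {Z : α → ℝ} (hZ : ∀ i, Z i = 0 ∨ Z i = 1)
    (hZfin : (Function.support Z).Finite) (g : α → ℝ) :
    ∑ᶠ i, Z i * g i = ∑ i ∈ hZfin.toFinset, g i := by
  rw [finsum_eq_sum_of_support_subset _ fun i hi =>
    hZfin.mem_toFinset.2 (Function.support_mul_subset_left Z g hi)]
  refine sum_congr rfl fun i hi => ?_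
  rw [(hZ i).resolve_left (by simpa using hi), one_mul]

theorem finsum_finsum_mul_eq_sum_sum_toFinset {α : Type*} {Z : α → ℝ}
    (hZ : ∀ i, Z i = 0 ∨ Z i = 1) (hZfin : (Function.support Z).Finite) (g : α → α → ℝ) :
    ∑ᶠ i, ∑ᶠ i', Z i * Z i' * g i i' = ∑ i ∈ hZfin.toFinset, ∑ i' ∈ hZfin.toFinset, g i i' := by
  calc ∑ᶠ i, ∑ᶠ i', Z i * Z i' * g i i' = ∑ᶠ i, Z i * ∑ i' ∈ hZfin.toFinset, g i i' :=
        finsum_congr fun i => by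
          rw [mul_sum, ← finsum_mul_eq_sum_toFinset hZ hZfin]
          exact finsum_congr fun i' => by ring
    _ = _ := finsum_mul_eq_sum_toFinset hZ hZfin _

section

variable {ι : Type*} [Fintype ι]

theorem sum_two_pow_mul_ite_card_eq (A : Finset ι) :
    ∑ k ∈ range (Fintype.card ι + 1), (2 : ℝ) ^ k * (if #A = k then 1 else 0) = 2 ^ #A := by
  simp [mul_ite, sum_ite_eq, Nat.lt_succ_of_le (card_le_univ A)]

variable [DecidableEq ι]

theorem sum_ite_union_subset (u A : Finset ι) :
    ∑ w : Finset ι, (if u ∪ w ⊆ A then 1 else 0 : ℝ) = if u ⊆ A then 2 ^ #A else 0 := by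
  by_cases hu : u ⊆ A
  · have : univ.filter (· ⊆ A) = A.powerset := by ext; simp
    simp [union_subset_iff, hu, sum_boole, this]
  · simp [union_subset_iff, hu]

theorem sum_pow_card_sdiff (u : Finset ι) (x : ℝ) :
    ∑ w : Finset ι, x ^ #(w \ u) = 2 ^ #u * (1 + x) ^ (Fintype.card ι - #u) := by
  have hprod (w : Finset ι) : ∏ j ∈ w, (if j ∈ u then 1 else x) = x ^ #(w \ u) := by
    rw [prod_ite, prod_const_one, one_mul, prod_const, sdiff_eq_filter]
  simp_rw [← hprod, ← powerset_univ, ← prod_one_add, add_ite]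
  rw [prod_ite]
  simp [filter_not, card_univ_sdiff, one_add_one_eq_two]

theorem card_univ_erase_empty :
    (#(univ.erase (∅ : Finset ι)) : ℝ) = 2 ^ Fintype.card ι - 1 := by
  rw [card_erase_of_mem (mem_univ _), card_univ, Fintype.card_finset,
    Nat.cast_sub Nat.one_le_two_pow]
  simp

theorem sum_finset_le_apply_empty_add (f : Finset ι → ℝ) {b : ℝ}
    (h : ∀ w : Finset ι, w.Nonempty → f w ≤ b) :
    ∑ w, f w ≤ f ∅ + (2 ^ Fintype.card ι - 1) * b := by
  rw [← add_sum_erase univ f (mem_univ ∅), ← card_univ_erase_empty, ← nsmul_eq_mul]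
  gcongr
  exact sum_le_card_nsmul _ _ _ fun w hw => h w (nonempty_iff_ne_empty.2 (ne_of_mem_erase hw))

theorem apply_empty_add_le_sum_finset (f : Finset ι → ℝ) {b : ℝ}
    (h : ∀ w : Finset ι, w.Nonempty → b ≤ f w) :
    f ∅ + (2 ^ Fintype.card ι - 1) * b ≤ ∑ w, f w := by
  rw [← add_sum_erase univ f (mem_univ ∅), ← card_univ_erase_empty, ← nsmul_eq_mul]
  gcongr
  exact card_nsmul_le_sum _ _ _ fun w hw => h w (nonempty_iff_ne_empty.2 (ne_of_mem_erase hw))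

end

noncomputable section

namespace BootstrapGain

variable {ι β : Type*} [Fintype ι] [DecidableEq β]

def agreement (i i' : ι → β) : Finset ι := univ.filter fun j => i j = i' j

theorem subset_agreement_iff {u : Finset ι} {i i' : ι → β} :
    u ⊆ agreement i i' ↔ ∀ j ∈ u, i j = i' j := by
  simp [agreement, subset_iff]

variable [DecidableEq ι] (S : Finset (ι → β))

-- `Nmatch`, `NmatchK`, `ν`, `ρ`, `νk`, `νt` and `γ` of the statement, for the set `S` of units
-- (so `N = #S`).

def matchCount (i : ι → β) (u : Finset ι) : ℝ :=
  ∑ i' ∈ S, if u ⊆ agreement i i' then 1 else 0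

def matchCountK (i : ι → β) (k : ℕ) : ℝ :=
  ∑ i' ∈ S, if #(agreement i i') = k then 1 else 0

def nu (u : Finset ι) : ℝ := 1 / #S * ∑ i ∈ S, matchCount S i u

def rho (k : ℕ) : ℝ := 1 / #S ^ 2 * ∑ i ∈ S, matchCountK S i k

def nuK (k : ℕ) (u : Finset ι) : ℝ :=
  1 / #S * ∑ i ∈ S, ∑ i' ∈ S, if #(agreement i i') = k ∧ u ⊆ agreement i i' then 1 else 0

def nuT (k : ℕ) (u : Finset ι) : ℝ := 1 / #S ^ 2 * ∑ i ∈ S, matchCount S i u * matchCountK S i k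

def gain (u : Finset ι) : ℝ :=
  ∑ k ∈ range (Fintype.card ι + 1), 2 ^ k * (nuK S k u - 2 * nuT S k u + rho S k * nu S u)

theorem sum_two_pow_mul_matchCountK (i : ι → β) :
    ∑ k ∈ range (Fintype.card ι + 1), 2 ^ k * matchCountK S i k
      = ∑ w : Finset ι, matchCount S i w := by
  simp only [matchCountK, matchCount, mul_sum]
  rw [sum_comm, sum_comm (s := univ)]
  refine sum_congr rfl fun i' _ => ?_
  rw [sum_two_pow_mul_ite_card_eq]
  simpa using (sum_ite_union_subset ∅ (agreement i i')).symm

theorem sum_two_pow_mul_nuK (u : Finset ι) :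
    ∑ k ∈ range (Fintype.card ι + 1), 2 ^ k * nuK S k u = ∑ w : Finset ι, nu S (u ∪ w) := by
  have key (A : Finset ι) : ∑ k ∈ range (Fintype.card ι + 1),
      (2 : ℝ) ^ k * (if #A = k ∧ u ⊆ A then 1 else 0)
        = ∑ w : Finset ι, (if u ∪ w ⊆ A then 1 else 0 : ℝ) := by
    rw [sum_ite_union_subset]
    by_cases hu : u ⊆ A
    · simpa [hu] using sum_two_pow_mul_ite_card_eq A
    · simp [hu]
  calc ∑ k ∈ range (Fintype.card ι + 1), 2 ^ k * nuK S k u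
      = 1 / #S * ∑ i ∈ S, ∑ i' ∈ S, ∑ k ∈ range (Fintype.card ι + 1),
          (2 : ℝ) ^ k * (if #(agreement i i') = k ∧ u ⊆ agreement i i' then 1 else 0) := by
        simp only [nuK, mul_sum, mul_left_comm _ (1 / _ : ℝ)]
        exact sum_comm.trans (sum_congr rfl fun _ _ => sum_comm)
    _ = ∑ w : Finset ι, nu S (u ∪ w) := by
        simp only [key, nu, matchCount, mul_sum]
        exact (sum_congr rfl fun _ _ => sum_comm).trans sum_comm

theorem sum_two_pow_mul_nuT (u : Finset ι) :
    ∑ k ∈ range (Fintype.card ι + 1), 2 ^ k * nuT S k u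
      = 1 / #S ^ 2 * ∑ w : Finset ι, ∑ i ∈ S, matchCount S i u * matchCount S i w := by
  calc ∑ k ∈ range (Fintype.card ι + 1), 2 ^ k * nuT S k u
      = 1 / #S ^ 2 * ∑ i ∈ S, matchCount S i u *
          ∑ k ∈ range (Fintype.card ι + 1), 2 ^ k * matchCountK S i k := by
        simp only [nuT, mul_sum]
        rw [sum_comm]
        exact sum_congr rfl fun _ _ => sum_congr rfl fun _ _ => by ring
    _ = _ := by
        simp only [sum_two_pow_mul_matchCountK, mul_sum]
        rw [sum_comm]

theorem sum_two_pow_mul_rho :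
    ∑ k ∈ range (Fintype.card ι + 1), 2 ^ k * rho S k = 1 / #S * ∑ w : Finset ι, nu S w := by
  calc ∑ k ∈ range (Fintype.card ι + 1), 2 ^ k * rho S k
      = 1 / #S ^ 2 * ∑ i ∈ S, ∑ k ∈ range (Fintype.card ι + 1), 2 ^ k * matchCountK S i k := by
        simp only [rho, mul_sum]
        rw [sum_comm]
        exact sum_congr rfl fun _ _ => sum_congr rfl fun _ _ => by ring
    _ = _ := by
        simp only [sum_two_pow_mul_matchCountK, nu, mul_sum]
        rw [sum_comm]
        exact sum_congr rfl fun _ _ => sum_congr rfl fun _ _ => by ring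

def gainCorrection (u w : Finset ι) : ℝ :=
  nu S w * nu S u / #S - 2 / #S ^ 2 * ∑ i ∈ S, matchCount S i u * matchCount S i w

theorem gain_eq_sum (u : Finset ι) :
    gain S u = ∑ w : Finset ι, (nu S (u ∪ w) + gainCorrection S u w) := by
  have hsplit : gain S u = ∑ k ∈ range (Fintype.card ι + 1), 2 ^ k * nuK S k u
      - 2 * ∑ k ∈ range (Fintype.card ι + 1), 2 ^ k * nuT S k u
      + (∑ k ∈ range (Fintype.card ι + 1), 2 ^ k * rho S k) * nu S u := by
    simp only [gain, mul_sum, sum_mul, ← sum_sub_distrib, ← sum_add_distrib]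
    exact sum_congr rfl fun _ _ => by ring
  rw [hsplit, sum_two_pow_mul_nuK, sum_two_pow_mul_nuT, sum_two_pow_mul_rho]
  simp only [gainCorrection, sum_add_distrib, sum_sub_distrib, ← mul_sum, ← sum_div, ← sum_mul]
  ring

theorem matchCount_nonneg (i : ι → β) (u : Finset ι) : 0 ≤ matchCount S i u :=
  sum_nonneg fun _ _ => ite_nonneg zero_le_one le_rfl

theorem one_le_matchCount {i : ι → β} (hi : i ∈ S) (u : Finset ι) : 1 ≤ matchCount S i u := by
  have hself : u ⊆ agreement i i := by simp [agreement]
  calc (1 : ℝ) = if u ⊆ agreement i i then 1 else 0 := by rw [if_pos hself]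
    _ ≤ matchCount S i u :=
      single_le_sum (f := fun i' => if u ⊆ agreement i i' then (1 : ℝ) else 0)
        (fun _ _ => ite_nonneg zero_le_one le_rfl) hi

theorem matchCount_empty (i : ι → β) : matchCount S i ∅ = #S := by
  simp [matchCount]

theorem matchCount_anti (i : ι → β) {w₁ w₂ : Finset ι} (h : w₁ ⊆ w₂) :
    matchCount S i w₂ ≤ matchCount S i w₁ :=
  sum_le_sum fun i' _ => by
    by_cases h₂ : w₂ ⊆ agreement i i'
    · simp [h₂, h.trans h₂]
    · simp only [h₂, if_false]; exact ite_nonneg zero_le_one le_rfl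

variable {S}

theorem sum_matchCount (hS : S.Nonempty) (u : Finset ι) :
    ∑ i ∈ S, matchCount S i u = #S * nu S u := by
  have : (#S : ℝ) ≠ 0 := by exact_mod_cast hS.card_ne_zero
  rw [nu]; field_simp

theorem one_le_nu (hS : S.Nonempty) (u : Finset ι) : 1 ≤ nu S u := by
  have hN : (0 : ℝ) < #S := by exact_mod_cast hS.card_pos
  rw [nu, one_div_mul_eq_div, le_div_iff₀ hN]
  simpa using card_nsmul_le_sum S _ 1 fun i hi => one_le_matchCount S hi u

theorem nu_pos (hS : S.Nonempty) (u : Finset ι) : 0 < nu S u :=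
  one_pos.trans_le (one_le_nu hS u)

theorem nu_empty (hS : S.Nonempty) : nu S ∅ = #S := by
  have : (#S : ℝ) ≠ 0 := by exact_mod_cast hS.card_ne_zero
  simp [nu, matchCount_empty]
  field_simp

variable {ε : ℝ}

theorem pos_of_forall_matchCount_le [Nonempty ι] (hS : S.Nonempty)
    (hε : ∀ i ∈ S, ∀ j, matchCount S i {j} ≤ #S * ε) : 0 < ε := by
  obtain ⟨i, hi⟩ := hS
  have hN : (0 : ℝ) < #S := by exact_mod_cast card_pos.2 ⟨i, hi⟩
  exact pos_of_mul_pos_right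
    (one_pos.trans_le <| (one_le_matchCount S hi _).trans (hε i hi (Classical.arbitrary ι))) hN.le

theorem matchCount_le (hε : ∀ i ∈ S, ∀ j, matchCount S i {j} ≤ #S * ε) {i : ι → β} (hi : i ∈ S)
    {w : Finset ι} (hw : w.Nonempty) : matchCount S i w ≤ #S * ε :=
  let ⟨j, hj⟩ := hw
  (matchCount_anti S i (singleton_subset_iff.2 hj)).trans (hε i hi j)

theorem nu_le (hS : S.Nonempty) (hε : ∀ i ∈ S, ∀ j, matchCount S i {j} ≤ #S * ε) {w : Finset ι}
    (hw : w.Nonempty) : nu S w ≤ #S * ε := by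
  have hN : (0 : ℝ) < #S := by exact_mod_cast hS.card_pos
  rw [nu, one_div_mul_eq_div, div_le_iff₀ hN]
  simpa [mul_comm] using sum_le_card_nsmul S _ _ fun i hi => matchCount_le hε hi hw

theorem gainCorrection_le (hS : S.Nonempty) (hε : ∀ i ∈ S, ∀ j, matchCount S i {j} ≤ #S * ε)
    (u : Finset ι) {w : Finset ι} (hw : w.Nonempty) :
    gainCorrection S u w ≤ ε * nu S u := by
  have hN : (0 : ℝ) < #S := by exact_mod_cast hS.card_pos
  have hcross : 0 ≤ 2 / #S ^ 2 * ∑ i ∈ S, matchCount S i u * matchCount S i w :=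
    mul_nonneg (by positivity) <| sum_nonneg fun i _ =>
      mul_nonneg (matchCount_nonneg S i u) (matchCount_nonneg S i w)
  have hfirst : nu S w * nu S u / #S ≤ ε * nu S u := by
    rw [div_le_iff₀ hN]
    nlinarith [nu_le hS hε hw, nu_pos hS u]
  rw [gainCorrection]
  linarith

theorem le_gainCorrection (hS : S.Nonempty) (hε : ∀ i ∈ S, ∀ j, matchCount S i {j} ≤ #S * ε)
    (u : Finset ι) {w : Finset ι} (hw : w.Nonempty) :
    nu S u / #S - 2 * ε * nu S u ≤ gainCorrection S u w := by
  have hN : (0 : ℝ) < #S := by exact_mod_cast hS.card_pos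
  have hsum : ∑ i ∈ S, matchCount S i u * matchCount S i w ≤ #S * nu S u * (#S * ε) := by
    rw [← sum_matchCount hS, sum_mul]
    exact sum_le_sum fun i hi =>
      mul_le_mul_of_nonneg_left (matchCount_le hε hi hw) (matchCount_nonneg S i u)
  have hcross : 2 / #S ^ 2 * ∑ i ∈ S, matchCount S i u * matchCount S i w ≤ 2 * ε * nu S u := by
    calc _ ≤ 2 / #S ^ 2 * (#S * nu S u * (#S * ε)) := by gcongr
      _ = 2 * ε * nu S u := by field_simp
  have hfirst : nu S u / #S ≤ nu S w * nu S u / #S := by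
    gcongr
    exact le_mul_of_one_le_left (nu_pos hS u).le (one_le_nu hS w)
  rw [gainCorrection]
  linarith

theorem gainCorrection_empty (hS : S.Nonempty) (u : Finset ι) :
    gainCorrection S u ∅ = -nu S u := by
  have : (#S : ℝ) ≠ 0 := by exact_mod_cast hS.card_ne_zero
  simp only [gainCorrection, nu_empty hS, matchCount_empty, ← sum_mul, sum_matchCount hS]
  field_simp
  ring

theorem two_pow_card_mul_nu_le_sum_nu_union (hS : S.Nonempty) (u : Finset ι) :
    2 ^ #u * nu S u ≤ ∑ w : Finset ι, nu S (u ∪ w) := by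
  calc 2 ^ #u * nu S u = ∑ w ∈ u.powerset, nu S (u ∪ w) := by
        rw [sum_congr rfl fun w hw => by rw [union_eq_left.2 (mem_powerset.1 hw)], sum_const,
          card_powerset, nsmul_eq_mul, Nat.cast_pow, Nat.cast_two]
    _ ≤ ∑ w : Finset ι, nu S (u ∪ w) :=
        sum_le_univ_sum_of_nonneg fun w => (nu_pos hS _).le

theorem sum_nu_union_le {η : ℝ} (hη : 0 ≤ η) {u : Finset ι}
    (hchain : ∀ v a, u ⊆ v → a ∉ v → nu S (insert a v) ≤ η * nu S v) :
    ∑ w : Finset ι, nu S (u ∪ w) ≤ 2 ^ #u * (1 + η) ^ (Fintype.card ι - #u) * nu S u := by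
  calc ∑ w : Finset ι, nu S (u ∪ w) ≤ ∑ w : Finset ι, η ^ #(w \ u) * nu S u :=
        sum_le_sum fun w _ => apply_union_le_pow_card_sdiff_mul hη hchain w
    _ = _ := by rw [← sum_mul, sum_pow_card_sdiff]

theorem gain_le (hS : S.Nonempty) (hε : ∀ i ∈ S, ∀ j, matchCount S i {j} ≤ #S * ε)
    {η : ℝ} (hη : 0 ≤ η) {u : Finset ι}
    (hchain : ∀ v a, u ⊆ v → a ∉ v → nu S (insert a v) ≤ η * nu S v) :
    gain S u ≤ (2 ^ #u * (1 + η) ^ (Fintype.card ι - #u) - 1 + (2 ^ Fintype.card ι - 1) * ε)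
      * nu S u := by
  have hcorr := sum_finset_le_apply_empty_add _ fun w hw => gainCorrection_le hS hε u hw
  rw [gainCorrection_empty hS] at hcorr
  rw [gain_eq_sum, sum_add_distrib]
  linarith [sum_nu_union_le hη hchain]

theorem lt_gain [Nonempty ι] (hS : S.Nonempty)
    (hε : ∀ i ∈ S, ∀ j, matchCount S i {j} ≤ #S * ε) (u : Finset ι) :
    (2 ^ #u - 1 - 2 * (2 ^ Fintype.card ι - 1) * ε) * nu S u < gain S u := by
  have hcorr := apply_empty_add_le_sum_finset _ fun w hw => le_gainCorrection hS hε u hw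
  rw [gainCorrection_empty hS] at hcorr
  have hpos : 0 < (2 ^ Fintype.card ι - 1) * (nu S u / #S) := by
    have : (1 : ℝ) < 2 ^ Fintype.card ι := one_lt_pow₀ one_lt_two Fintype.card_ne_zero
    have : (0 : ℝ) < #S := by exact_mod_cast hS.card_pos
    have := nu_pos hS u
    positivity
  rw [gain_eq_sum, sum_add_distrib]
  linarith [two_pow_card_mul_nu_le_sum_nu_union hS u]

theorem gain_div_nu_bounds (hS : S.Nonempty)
    (hε : ∀ i ∈ S, ∀ j, matchCount S i {j} ≤ #S * ε) {η : ℝ} (hη : 0 ≤ η)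
    (hηub : ∀ v w : Finset ι, ∅ ⊂ v → v ⊂ w → nu S w / nu S v ≤ η) {u : Finset ι}
    (hu : u.Nonempty) :
    2 ^ #u - 1 - (2 ^ (Fintype.card ι + 1) - 2) * ε < gain S u / nu S u
    ∧ gain S u / nu S u ≤ 2 ^ #u * (1 + 2 * η) ^ (Fintype.card ι - #u) - 1
        + (2 ^ (Fintype.card ι + 1) - 2) * ε := by
  have : Nonempty ι := hu.to_type
  have hchain (v : Finset ι) (a : ι) (huv : u ⊆ v) (ha : a ∉ v) :
      nu S (insert a v) ≤ η * nu S v := by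
    have := hηub v (insert a v) (empty_ssubset.2 (hu.mono huv)) (ssubset_insert ha)
    rwa [div_le_iff₀ (nu_pos hS v)] at this
  have hνu := nu_pos hS u
  have hε0 := pos_of_forall_matchCount_le hS hε
  have hpow : (1 + η) ^ (Fintype.card ι - #u) ≤ (1 + 2 * η) ^ (Fintype.card ι - #u) := by
    gcongr; linarith
  have htwo : (2 : ℝ) ^ (Fintype.card ι + 1) - 2 = 2 * (2 ^ Fintype.card ι - 1) := by ring
  rw [lt_div_iff₀ hνu, div_le_iff₀ hνu, htwo]
  refine ⟨lt_gain hS hε u, (gain_le hS hε hη hchain).trans ?_⟩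
  gcongr ?_ * _
  have : (1 : ℝ) ≤ 2 ^ Fintype.card ι := one_le_pow₀ one_le_two
  nlinarith [pow_nonneg (zero_le_two (α := ℝ)) #u]

end BootstrapGain

end

theorem stmt15_general {r : ℕ}
    (Z : (Fin r → ℕ) → ℝ)
    (hZ01 : ∀ i, Z i = 0 ∨ Z i = 1)
    (hZfin : (Function.support Z).Finite)
    (N : ℝ) (hN : N = ∑ᶠ i, Z i) (hNpos : 0 < N)
    (Nmatch : (Fin r → ℕ) → Finset (Fin r) → ℝ)
    (hNmatch : ∀ i u, Nmatch i u
      = ∑ᶠ i', Z i' * (if ∀ j ∈ u, i j = i' j then (1 : ℝ) else 0))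
    (NmatchK : (Fin r → ℕ) → ℕ → ℝ)
    (hNmatchK : ∀ i k, NmatchK i k
      = ∑ᶠ i', Z i' * (if (Finset.univ.filter (fun j => i j = i' j)).card = k
          then (1 : ℝ) else 0))
    (ν : Finset (Fin r) → ℝ)
    (hν : ∀ u, ν u = (1 / N) * ∑ᶠ i, Z i * Nmatch i u)
    (ρ : ℕ → ℝ)
    (hρ : ∀ k, ρ k = (1 / N ^ 2) * ∑ᶠ i, Z i * NmatchK i k)
    (νk : ℕ → Finset (Fin r) → ℝ)
    (hνk : ∀ k u, νk k u = (1 / N) * ∑ᶠ i, ∑ᶠ i', Z i * Z i' *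
      (if (Finset.univ.filter (fun j => i j = i' j)).card = k ∧ ∀ j ∈ u, i j = i' j
        then (1 : ℝ) else 0))
    (νt : ℕ → Finset (Fin r) → ℝ)
    (hνt : ∀ k u, νt k u = (1 / N ^ 2) * ∑ᶠ i, Z i * Nmatch i u * NmatchK i k)
    (γ : Finset (Fin r) → ℝ)
    (hγ : ∀ u, γ u = ∑ k ∈ Finset.range (r + 1),
      (2 : ℝ) ^ k * (νk k u - 2 * νt k u + ρ k * ν u))
    (eps : ℝ)
    (hepsub : ∀ (i : Fin r → ℕ) (j : Fin r), Z i = 1 → Nmatch i {j} / N ≤ eps)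
    (η : ℝ)
    (hηub : ∀ u v : Finset (Fin r), ∅ ⊂ u → u ⊂ v → ν v / ν u ≤ η)
    (hηmax : ∃ u v : Finset (Fin r), ∅ ⊂ u ∧ u ⊂ v ∧ ν v / ν u = η)
    (u : Finset (Fin r)) (hu : u.Nonempty) :
    2 ^ u.card - 1 - (2 ^ (r + 1) - 2) * eps < γ u / ν u
    ∧ γ u / ν u ≤ 2 ^ u.card * (1 + 2 * η) ^ (r - u.card) - 1
        + (2 ^ (r + 1) - 2) * eps := by
  classical
  open BootstrapGain in
  have hfin := finsum_mul_eq_sum_toFinset hZ01 hZfin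
  have hfin₂ := finsum_finsum_mul_eq_sum_sum_toFinset hZ01 hZfin
  set S := hZfin.toFinset
  obtain rfl : N = #S := by simpa [hN] using hfin fun _ => 1
  obtain rfl : Nmatch = matchCount S := by
    ext i w; rw [hNmatch, hfin]; simp only [matchCount, subset_agreement_iff]
  obtain rfl : NmatchK = matchCountK S := by
    ext i k; rw [hNmatchK, hfin]; rfl
  obtain rfl : ν = nu S := funext fun w => by rw [hν, hfin, nu]
  have hγS : γ u = gain S u := by
    rw [hγ, gain, Fintype.card_fin]
    refine sum_congr rfl fun k _ => ?_
    rw [hνk, hνt, hρ, hfin₂, hfin]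
    simp only [mul_assoc (Z _), hfin, nuK, nuT, rho, subset_agreement_iff]
    rfl
  have hS : S.Nonempty := card_pos.1 (by exact_mod_cast hNpos)
  have hε : ∀ i ∈ S, ∀ j, matchCount S i {j} ≤ #S * eps := fun i hi j => by
    have := hepsub i j ((hZ01 i).resolve_left (by simpa [S] using hi))
    rwa [div_le_iff₀ hNpos, mul_comm] at this
  have hη : 0 ≤ η := by
    obtain ⟨u', v', -, -, rfl⟩ := hηmax
    exact div_nonneg (nu_pos hS v').le (nu_pos hS u').le
  simpa [hγS] using gain_div_nu_bounds hS hε hη hηub hu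

/-- Theorem 6, first claim (`τ² = 1`): for every nonempty `u ⊆ [r]`,
`2^{|u|} − 1 − (2^{r+1}−2)ε < γ_u/ν_u ≤ 2^{|u|}(1+2η)^{r−|u|} − 1 + (2^{r+1}−2)ε`,
where `ε = max_i max_j N_{i,{j}}/N` and `η = max_{∅ ⊊ u ⊊ v} ν_v/ν_u`. -/
theorem stmt15 {r : ℕ} (hr : 2 ≤ r)
    (Z : (Fin r → ℕ) → ℝ)
    (hZ01 : ∀ i, Z i = 0 ∨ Z i = 1)
    (hZfin : (Function.support Z).Finite)
    (N : ℝ) (hN : N = ∑ᶠ i, Z i) (hNpos : 0 < N)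
    (Nmatch : (Fin r → ℕ) → Finset (Fin r) → ℝ)
    (hNmatch : ∀ i u, Nmatch i u
      = ∑ᶠ i', Z i' * (if ∀ j ∈ u, i j = i' j then (1 : ℝ) else 0))
    (NmatchK : (Fin r → ℕ) → ℕ → ℝ)
    (hNmatchK : ∀ i k, NmatchK i k
      = ∑ᶠ i', Z i' * (if (Finset.univ.filter (fun j => i j = i' j)).card = k
          then (1 : ℝ) else 0))
    (ν : Finset (Fin r) → ℝ)
    (hν : ∀ u, ν u = (1 / N) * ∑ᶠ i, Z i * Nmatch i u)
    (ρ : ℕ → ℝ)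
    (hρ : ∀ k, ρ k = (1 / N ^ 2) * ∑ᶠ i, Z i * NmatchK i k)
    (νk : ℕ → Finset (Fin r) → ℝ)
    (hνk : ∀ k u, νk k u = (1 / N) * ∑ᶠ i, ∑ᶠ i', Z i * Z i' *
      (if (Finset.univ.filter (fun j => i j = i' j)).card = k ∧ ∀ j ∈ u, i j = i' j
        then (1 : ℝ) else 0))
    (νt : ℕ → Finset (Fin r) → ℝ)
    (hνt : ∀ k u, νt k u = (1 / N ^ 2) * ∑ᶠ i, Z i * Nmatch i u * NmatchK i k)
    (γ : Finset (Fin r) → ℝ)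
    (hγ : ∀ u, γ u = ∑ k ∈ Finset.range (r + 1),
      (2 : ℝ) ^ k * (νk k u - 2 * νt k u + ρ k * ν u))
    (eps : ℝ)
    (hepsub : ∀ (i : Fin r → ℕ) (j : Fin r), Z i = 1 → Nmatch i {j} / N ≤ eps)
    (hepsmax : ∃ (i : Fin r → ℕ) (j : Fin r), Z i = 1 ∧ Nmatch i {j} / N = eps)
    (η : ℝ)
    (hηub : ∀ u v : Finset (Fin r), ∅ ⊂ u → u ⊂ v → ν v / ν u ≤ η)
    (hηmax : ∃ u v : Finset (Fin r), ∅ ⊂ u ∧ u ⊂ v ∧ ν v / ν u = η)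
    (u : Finset (Fin r)) (hu : u.Nonempty) :
    2 ^ u.card - 1 - (2 ^ (r + 1) - 2) * eps < γ u / ν u
    ∧ γ u / ν u ≤ 2 ^ u.card * (1 + 2 * η) ^ (r - u.card) - 1
        + (2 ^ (r + 1) - 2) * eps :=
  stmt15_general Z hZ01 hZfin N hN hNpos Nmatch hNmatch NmatchK hNmatchK ν hν ρ hρ νk hνk νt hνt γ
    hγ eps hepsub η hηub hηmax u hu
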